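/- Let p be an odd prime. Then #{(t,x,y,z) ∈ F_p^4 : (x,y,z) ≠ (0,0,0) and t^2 = x·y·z·(x+y)·(y+z)·(−x+z)} = (p−1)·(p^2 + p + 1 + a_3). -/

import Mathlib

/-!
Let `χ` be the quadratic character and `G` the sextic. Counting the `t` over each `w = (x, y, z)`,
the number of points is `∑_{w ≠ 0} (1 + χ (G w))`. As `G` is homogeneous of even degree, every
slice `y ≠ 0` contributes as much as the slice `y = -1`, where `G = x(x-1) · z(z-1) · (x-z)`,
while the slice `y = 0` contributes nothing. Parametrising the `x` for which `x(x-1)` is a square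
by `x = (1+a)²/(4a)` turns this double sum into `∑ χ(ab(b-a)(1-ab))`. The substitutions `v = uw`,
`s = u²` and `b = sw` turn `(∑ χ(u³-u))²` into the same sum, up to the factor `χ(-1)` and the
term `p(1 + χ(-1))`. Finally `∑ χ(u³-u) = -a₂`, and this sum vanishes when `χ(-1) = -1` because
its summand is odd.
-/

open Finset

lemma sum_comp_eq_sum_card_mul {α β R : Type*} [Fintype β] [DecidableEq β] [NonAssocSemiring R]
    (s : Finset α) (g : α → β) (f : β → R) :
    ∑ x ∈ s, f (g x) = ∑ y, (#{x ∈ s | g x = y} : R) * f y := by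
  rw [← sum_fiberwise' s g f]
  simp only [sum_const, nsmul_eq_mul]

lemma four_ne_zero_of_ringChar_ne_two {R : Type*} [Ring R] [NoZeroDivisors R] [Nontrivial R]
    (hR : ringChar R ≠ 2) : (4 : R) ≠ 0 := by
  rw [show (4 : R) = 2 ^ 2 by norm_num]
  exact pow_ne_zero 2 (Ring.two_ne_zero hR)

/-- Scaling by `-y` identifies each slice `y ≠ 0` with the slice `y = -1`. -/
lemma sum_sum_sum_of_scaling_invariant {K R : Type*} [Field K] [Fintype K] [CommRing R]
    (φ : K → K → K → R) (hφ : ∀ c ≠ 0, ∀ x y z, φ (c * x) (c * y) (c * z) = φ x y z) :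
    ∑ x, ∑ y, ∑ z, φ x y z
      = ∑ x, ∑ z, φ x 0 z + ((Fintype.card K : R) - 1) * ∑ x, ∑ z, φ x (-1) z := by
  classical
  have hslice : ∀ y ≠ 0, ∑ x, ∑ z, φ x y z = ∑ x, ∑ z, φ x (-1) z := by
    intro y hy
    have hc : -y ≠ 0 := neg_ne_zero.2 hy
    rw [← Equiv.sum_comp (Equiv.mulLeft₀ (-y) hc)]
    refine sum_congr rfl fun x _ => ?_
    rw [← Equiv.sum_comp (Equiv.mulLeft₀ (-y) hc)]
    refine sum_congr rfl fun z _ => ?_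
    simp only [Equiv.mulLeft₀_apply]
    rw [← hφ (-y) hc x (-1) z, mul_neg_one, neg_neg]
  rw [sum_comm, ← add_sum_erase _ _ (mem_univ 0),
    sum_congr rfl fun y hy => hslice y (ne_of_mem_erase hy), sum_const, card_erase_of_mem (mem_univ 0),
    card_univ, nsmul_eq_mul, Nat.cast_sub Fintype.card_pos, Nat.cast_one]

section QuadraticCharSums

variable {F : Type*} [Field F] [Fintype F] [DecidableEq F]

local notation "χ" => quadraticChar F
local notation "q" => (Fintype.card F : ℤ)

lemma quadraticChar_sq_mul {a : F} (ha : a ≠ 0) (b : F) : χ (a ^ 2 * b) = χ b := by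
  rw [map_mul, quadraticChar_sq_one' ha, one_mul]

lemma card_sq_eq_one_add_quadraticChar (hF : ringChar F ≠ 2) (a : F) : (#{x : F | x ^ 2 = a} : ℤ) = 1 + χ a := by
  rw [add_comm, ← quadraticChar_card_sqrts hF a, Set.toFinset_ofPred]

lemma sum_comp_sq (hF : ringChar F ≠ 2) (f : F → ℤ) :
    ∑ u, f (u ^ 2) = ∑ s, (1 + χ s) * f s := by
  simp only [sum_comp_eq_sum_card_mul univ (· ^ 2) f, card_sq_eq_one_add_quadraticChar hF]

/-- `x ↦ 1 + c / x` permutes `F` and sends `0` to `1`. -/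
lemma sum_quadraticChar_mul_add (hF : ringChar F ≠ 2) {c : F} (hc : c ≠ 0) :
    ∑ x, χ (x * (x + c)) = -1 := by
  have hterm : ∀ x : F, χ (x * (x + c)) = χ (1 + c * x⁻¹) - if x = 0 then 1 else 0 := by
    intro x
    rcases eq_or_ne x 0 with rfl | hx
    · simp
    · rw [if_neg hx, sub_zero, ← quadraticChar_sq_mul hx (1 + c * x⁻¹)]
      congr 1
      field_simp
  have hperm : ∑ x : F, χ (1 + c * x⁻¹) = 0 := by
    rw [← quadraticChar_sum_zero hF]
    exact Fintype.sum_equiv ((Equiv.inv F).trans ((Equiv.mulLeft₀ c hc).trans (Equiv.addLeft 1)))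
      _ _ fun x => rfl
  rw [sum_congr rfl fun x _ => hterm x, sum_sub_distrib, hperm, sum_ite_eq' univ (0 : F)]
  simp

lemma sum_quadraticChar_sub_mul_sub (hF : ringChar F ≠ 2) (a b : F) :
    ∑ x, χ ((x - a) * (x - b)) = if a = b then q - 1 else -1 := by
  split_ifs with hab
  · subst hab
    have hterm : ∀ x, χ ((x - a) * (x - a)) = 1 - if x = a then 1 else 0 := fun x => by
      split_ifs with hx
      · simp [hx]
      · rw [← sq, quadraticChar_sq_one' (sub_ne_zero.2 hx), sub_zero]
    simp only [hterm, sum_sub_distrib, sum_const, card_univ, nsmul_eq_mul, mul_one,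
      sum_ite_eq' univ a, mem_univ, if_true]
  · rw [← sum_quadraticChar_mul_add hF (sub_ne_zero.2 hab)]
    exact Fintype.sum_equiv (Equiv.subRight a) _ _ fun x => by
      simp only [Equiv.subRight_apply]; ring_nf

/-- `y(y-1)` is a square exactly when `y = (1+a)²/(4a)`; `a` and `a⁻¹` give the same `y`. -/
lemma sum_one_add_quadraticChar_mul_sub_one (hF : ringChar F ≠ 2) (g : F → ℤ) :
    ∑ y, (1 + χ (y * (y - 1))) * g y = ∑ a with a ≠ 0, g ((1 + a) ^ 2 / (4 * a)) := by
  have h2 : (2 : F) ≠ 0 := Ring.two_ne_zero hF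
  have h4 := four_ne_zero_of_ringChar_ne_two hF
  rw [sum_comp_eq_sum_card_mul]
  refine sum_congr rfl fun y _ => congrArg (· * g y) ?_
  rw [filter_filter, ← quadraticChar_sq_mul h2, ← card_sq_eq_one_add_quadraticChar hF]
  congr 1
  refine (card_equiv (Equiv.addRight (1 - 2 * y)) fun a => ?_).symm
  simp only [mem_filter, mem_univ, true_and, Equiv.coe_addRight]
  constructor
  · rintro ⟨ha, rfl⟩
    field_simp
    ring
  · intro h
    have ha : a ≠ 0 := by
      rintro rfl
      exact one_ne_zero (by linear_combination h)
    refine ⟨ha, ?_⟩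
    field_simp
    linear_combination h

lemma sum_quadraticChar_sub_left (hF : ringChar F ≠ 2) (x : F) : ∑ y, χ (x - y) = 0 := by
  rw [← quadraticChar_sum_zero hF]
  exact Fintype.sum_equiv (Equiv.subLeft x) _ _ fun _ => rfl

lemma sum_quadraticChar_sub_right (hF : ringChar F ≠ 2) (y : F) : ∑ x, χ (x - y) = 0 := by
  rw [← quadraticChar_sum_zero hF]
  exact Fintype.sum_equiv (Equiv.subRight y) _ _ fun _ => rfl

lemma quadraticChar_div_sub_div (hF : ringChar F ≠ 2) {a b : F} (ha : a ≠ 0) (hb : b ≠ 0) :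
    χ ((1 + a) ^ 2 / (4 * a) - (1 + b) ^ 2 / (4 * b)) = χ (a * b * (b - a) * (1 - a * b)) := by
  have h2 : (2 : F) ≠ 0 := Ring.two_ne_zero hF
  have h4 := four_ne_zero_of_ringChar_ne_two hF
  rw [← quadraticChar_sq_mul (inv_ne_zero (mul_ne_zero (mul_ne_zero h2 ha) hb))
    (a * b * (b - a) * (1 - a * b))]
  congr 1
  field_simp
  ring

lemma sum_sum_quadraticChar_mul_sub_one_eq_sum_sum_one_sub_mul (hF : ringChar F ≠ 2) :
    ∑ x, ∑ y, χ (x * (x - 1) * (y * (y - 1)) * (x - y))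
      = ∑ a, ∑ b, χ (a * b * (b - a) * (1 - a * b)) := by
  set A : F → ℤ := fun x => χ (x * (x - 1))
  have hprod : ∀ x y, χ (x * (x - 1) * (y * (y - 1)) * (x - y)) = A x * (A y * χ (x - y)) := by
    intro x y
    simp only [A, map_mul]
    ring
  have hexp : ∀ x, (1 + A x) * ∑ y, (1 + A y) * χ (x - y)
      = ∑ y, A x * (A y * χ (x - y)) + ∑ y, A y * χ (x - y) := fun x => by
    simp only [add_mul, one_mul, sum_add_distrib, sum_quadraticChar_sub_left hF, zero_add,
      mul_sum]
    ring
  have hcross : ∑ x, ∑ y, A y * χ (x - y) = 0 := by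
    rw [sum_comm]
    simp only [← mul_sum, sum_quadraticChar_sub_right hF, mul_zero, sum_const_zero]
  calc ∑ x, ∑ y, χ (x * (x - 1) * (y * (y - 1)) * (x - y))
      = ∑ x, (1 + A x) * ∑ y, (1 + A y) * χ (x - y) := by
        simp only [hprod, hexp, sum_add_distrib, hcross, add_zero]
    _ = ∑ b with b ≠ 0, ∑ a with a ≠ 0, χ ((1 + a) ^ 2 / (4 * a) - (1 + b) ^ 2 / (4 * b)) := by
        simp only [A, sum_one_add_quadraticChar_mul_sub_one hF, mul_sum]
        rw [sum_comm]
        exact sum_congr rfl fun b _ =>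
          sum_one_add_quadraticChar_mul_sub_one hF fun x => χ (x - (1 + b) ^ 2 / (4 * b))
    _ = ∑ a with a ≠ 0, ∑ b with b ≠ 0, χ (a * b * (b - a) * (1 - a * b)) := by
        rw [sum_comm]
        refine sum_congr rfl fun a ha => sum_congr rfl fun b hb => ?_
        exact quadraticChar_div_sub_div hF (mem_filter.1 ha).2 (mem_filter.1 hb).2
    _ = ∑ a, ∑ b, χ (a * b * (b - a) * (1 - a * b)) := by
        have hb : ∀ a : F, ∑ b with b ≠ 0, χ (a * b * (b - a) * (1 - a * b))
            = ∑ b, χ (a * b * (b - a) * (1 - a * b)) := fun a =>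
          sum_filter_of_ne fun b _ h hb => h (by simp [hb])
        simp only [hb]
        exact sum_filter_of_ne fun a _ h ha => h (by simp [ha])

lemma sum_sum_quadraticChar_sub_one_mul (hF : ringChar F ≠ 2) :
    ∑ w, ∑ s, χ ((s - 1) * w * (s * w ^ 2 - 1)) = q * (1 + χ (-1)) := by
  have hrow : ∀ w : F, ∑ s, χ ((s - 1) * w * (s * w ^ 2 - 1))
      = χ w * ((if w ^ 2 = 1 then q else 0) - 1) := by
    intro w
    rcases eq_or_ne w 0 with rfl | hw
    · simp
    have hterm : ∀ s, χ ((s - 1) * w * (s * w ^ 2 - 1)) = χ w * χ ((s - 1) * (s - w⁻¹ ^ 2)) := by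
      intro s
      rw [← map_mul, ← quadraticChar_sq_mul hw (w * ((s - 1) * (s - w⁻¹ ^ 2)))]
      congr 1
      field_simp
    rw [sum_congr rfl fun s _ => hterm s, ← mul_sum, sum_quadraticChar_sub_mul_sub hF, inv_pow]
    by_cases h1 : w ^ 2 = 1
    · rw [if_pos h1, if_pos (by rw [h1, inv_one])]
    · rw [if_neg h1, if_neg fun h => h1 (inv_eq_one.1 h.symm), zero_sub]
  have hroots : ({w : F | w ^ 2 = 1} : Finset F) = {1, -1} := by
    ext w
    simp
  rw [sum_congr rfl fun w _ => hrow w]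
  simp only [mul_sub, mul_ite, mul_zero, mul_one, sum_sub_distrib, ← sum_filter, hroots,
    quadraticChar_sum_zero hF, sum_pair (Ring.neg_one_ne_one_of_char_ne_two hF).symm, map_one]
  ring

lemma sum_quadraticChar_cube_sub_self_eq_zero (h : χ (-1) = -1) : ∑ x, χ (x ^ 3 - x) = 0 := by
  have hneg : ∑ x, χ (x ^ 3 - x) = -∑ x, χ (x ^ 3 - x) := calc
    ∑ x, χ (x ^ 3 - x) = ∑ x, χ ((-x) ^ 3 - -x) := (Equiv.sum_comp (Equiv.neg F) _).symm
    _ = ∑ x, χ (-1) * χ (x ^ 3 - x) := sum_congr rfl fun x _ => by rw [← map_mul]; ring_nf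
    _ = -∑ x, χ (x ^ 3 - x) := by simp only [h, neg_one_mul, sum_neg_distrib]
  linarith

lemma sq_sum_quadraticChar_cube_sub_self (hF : ringChar F ≠ 2) :
    (∑ x, χ (x ^ 3 - x)) ^ 2
      = q * (1 + χ (-1)) + χ (-1) * ∑ a, ∑ b, χ (a * b * (b - a) * (1 - a * b)) := by
  have hrow : ∀ u, ∑ v, χ ((u ^ 3 - u) * (v ^ 3 - v))
      = ∑ w, χ ((u ^ 2 - 1) * w * (u ^ 2 * w ^ 2 - 1)) := by
    intro u
    rcases eq_or_ne u 0 with rfl | hu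
    · rw [show ∑ v : F, χ ((0 ^ 3 - 0) * (v ^ 3 - v)) = 0 by simp, ← quadraticChar_sum_zero hF]
      exact sum_congr rfl fun w _ => by ring_nf
    rw [← Equiv.sum_comp (Equiv.mulLeft₀ u hu)]
    refine sum_congr rfl fun w _ => ?_
    rw [← quadraticChar_sq_mul hu ((u ^ 2 - 1) * w * (u ^ 2 * w ^ 2 - 1))]
    congr 1
    simp only [Equiv.mulLeft₀_apply]
    ring
  have hcol : ∀ w, ∑ s, χ (s * ((s - 1) * w * (s * w ^ 2 - 1)))
      = χ (-1) * ∑ b, χ (w * b * (b - w) * (1 - w * b)) := by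
    intro w
    rcases eq_or_ne w 0 with rfl | hw
    · simp
    rw [← Equiv.sum_comp (Equiv.mulLeft₀ w hw) fun b => χ (w * b * (b - w) * (1 - w * b)),
      mul_sum]
    refine sum_congr rfl fun s _ => ?_
    rw [← map_mul, ← quadraticChar_sq_mul hw (s * ((s - 1) * w * (s * w ^ 2 - 1)))]
    congr 1
    simp only [Equiv.mulLeft₀_apply]
    ring
  calc (∑ x, χ (x ^ 3 - x)) ^ 2 = ∑ u, ∑ v, χ ((u ^ 3 - u) * (v ^ 3 - v)) := by
        simp only [sq, sum_mul_sum, map_mul]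
    _ = ∑ w, ∑ u, χ ((u ^ 2 - 1) * w * (u ^ 2 * w ^ 2 - 1)) := by
        simp only [hrow]
        exact sum_comm
    _ = ∑ w, ∑ s, (1 + χ s) * χ ((s - 1) * w * (s * w ^ 2 - 1)) :=
        sum_congr rfl fun w _ => sum_comp_sq hF fun s => χ ((s - 1) * w * (s * w ^ 2 - 1))
    _ = ∑ w, ∑ s, χ ((s - 1) * w * (s * w ^ 2 - 1))
          + ∑ w, ∑ s, χ (s * ((s - 1) * w * (s * w ^ 2 - 1))) := by
        simp only [add_mul, one_mul, ← map_mul, sum_add_distrib]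
    _ = _ := by
        rw [sum_sum_quadraticChar_sub_one_mul hF, sum_congr rfl fun w _ => hcol w, ← mul_sum]

lemma sum_sum_quadraticChar_mul_sub_one_eq (hF : ringChar F ≠ 2) :
    ∑ x, ∑ y, χ (x * (x - 1) * (y * (y - 1)) * (x - y))
      = χ (-1) * ((∑ x, χ (x ^ 3 - x)) ^ 2 - q * (1 + χ (-1))) := by
  have h1 : χ (-1) ^ 2 = 1 := quadraticChar_sq_one (neg_ne_zero.2 one_ne_zero)
  rw [sum_sum_quadraticChar_mul_sub_one_eq_sum_sum_one_sub_mul hF, sq_sum_quadraticChar_cube_sub_self hF]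
  linear_combination (-∑ a, ∑ b, χ (a * b * (b - a) * (1 - a * b))) * h1

lemma natCard_sq_eq_sum (hF : ringChar F ≠ 2) {α : Type*} [Fintype α] (P : α → Prop)
    [DecidablePred P] (g : α → F) :
    (Nat.card {v : F × α // P v.2 ∧ v.1 ^ 2 = g v.2} : ℤ) = ∑ w with P w, (1 + χ (g w)) := by
  rw [Nat.card_eq_fintype_card, Fintype.card_subtype, card_filter, Fintype.sum_prod_type, sum_comm,
    sum_filter]
  push_cast
  refine sum_congr rfl fun w _ => ?_
  split_ifs with hw
  · simp only [hw, true_and, ← card_sq_eq_one_add_quadraticChar hF, card_filter, Nat.cast_sum, Nat.cast_ite,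
      Nat.cast_one, Nat.cast_zero]
  · simp [hw]

lemma sum_quadraticChar_sextic (hF : ringChar F ≠ 2) :
    ∑ w : F × F × F,
        χ (w.1 * w.2.1 * w.2.2 * (w.1 + w.2.1) * (w.2.1 + w.2.2) * (-w.1 + w.2.2))
      = (q - 1) * (χ (-1) * ((∑ x, χ (x ^ 3 - x)) ^ 2 - q * (1 + χ (-1)))) := by
  have hscale : ∀ c : F, c ≠ 0 → ∀ x y z,
      χ (c * x * (c * y) * (c * z) * (c * x + c * y) * (c * y + c * z) * (-(c * x) + c * z))
        = χ (x * y * z * (x + y) * (y + z) * (-x + z)) := by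
    intro c hc x y z
    rw [← quadraticChar_sq_mul (pow_ne_zero 3 hc) (x * y * z * (x + y) * (y + z) * (-x + z))]
    ring_nf
  simp only [Fintype.sum_prod_type]
  rw [sum_sum_sum_of_scaling_invariant _ hscale, ← sum_sum_quadraticChar_mul_sub_one_eq hF]
  simp only [mul_zero, zero_mul, MulChar.map_zero, sum_const_zero, zero_add]
  congr 1
  exact sum_congr rfl fun x _ => sum_congr rfl fun z _ => by ring_nf

lemma natCard_sq_eq_sextic (hF : ringChar F ≠ 2) :
    (Nat.card {v : F × F × F × F //
        (v.2.1, v.2.2.1, v.2.2.2) ≠ (0, 0, 0) ∧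
        v.1 ^ 2 = v.2.1 * v.2.2.1 * v.2.2.2 * (v.2.1 + v.2.2.1) *
          (v.2.2.1 + v.2.2.2) * (-v.2.1 + v.2.2.2)} : ℤ)
      = (q - 1) * (q ^ 2 + q + 1 + χ (-1) * ((∑ x, χ (x ^ 3 - x)) ^ 2 - q * (1 + χ (-1)))) := by
  simp only [Prod.mk.eta, Prod.mk_zero_zero]
  refine (natCard_sq_eq_sum hF (fun w : F × F × F => w ≠ 0)
    fun w => w.1 * w.2.1 * w.2.2 * (w.1 + w.2.1) * (w.2.1 + w.2.2) * (-w.1 + w.2.2)).trans ?_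
  rw [filter_ne', sum_erase_eq_sub (mem_univ 0), sum_add_distrib, sum_quadraticChar_sextic hF]
  simp only [sum_const, card_univ, Fintype.card_prod, nsmul_eq_mul, Nat.cast_mul, mul_one,
    Prod.fst_zero, Prod.snd_zero, mul_zero, zero_mul, quadraticChar_zero, add_zero]
  ring

lemma natCard_sq_eq_cube_sub_self (hF : ringChar F ≠ 2) :
    (Nat.card {xy : F × F // xy.2 ^ 2 = xy.1 ^ 3 - xy.1} : ℤ) = q + ∑ x, χ (x ^ 3 - x) := by
  have hswap : Nat.card {xy : F × F // xy.2 ^ 2 = xy.1 ^ 3 - xy.1}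
      = Nat.card {v : F × F // True ∧ v.1 ^ 2 = v.2 ^ 3 - v.2} :=
    Nat.card_congr ((Equiv.prodComm F F).subtypeEquiv fun _ => (and_iff_right trivial).symm)
  rw [hswap, natCard_sq_eq_sum hF (fun _ => True) fun x => x ^ 3 - x,
    filter_true_of_mem fun _ _ => trivial,
    sum_add_distrib, sum_const, card_univ]
  simp

end QuadraticCharSums

/-- Proposition 4.4 of the paper.
Let `p` be an odd prime, `a₂ = p − #{(x,y) : y² = x³ − x}`, and `a₃ = a₂² − 2p` if
`p ≡ 1 (mod 4)`, `a₃ = 0` if `p ≡ 3 (mod 4)`.  Then the number of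
`(t,x,y,z) ∈ F_p⁴` with `(x,y,z) ≠ (0,0,0)` and `t² = x·y·z·(x+y)·(y+z)·(−x+z)`
equals `(p−1)·(p² + p + 1 + a₃)`. -/
theorem statement12 (p : ℕ) [Fact p.Prime] (hodd : Odd p)
    (a2 : ℤ)
    (ha2 : a2 = p - Nat.card {xy : ZMod p × ZMod p // xy.2 ^ 2 = xy.1 ^ 3 - xy.1})
    (a3 : ℤ)
    (ha31 : p % 4 = 1 → a3 = a2 ^ 2 - 2 * p)
    (ha33 : p % 4 = 3 → a3 = 0) :
    (Nat.card {v : ZMod p × ZMod p × ZMod p × ZMod p //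
        (v.2.1, v.2.2.1, v.2.2.2) ≠ (0, 0, 0) ∧
        v.1 ^ 2 = v.2.1 * v.2.2.1 * v.2.2.2 * (v.2.1 + v.2.2.1) *
          (v.2.2.1 + v.2.2.2) * (-v.2.1 + v.2.2.2)} : ℤ) =
      (p - 1) * (p ^ 2 + p + 1 + a3) := by
  have hF : ringChar (ZMod p) ≠ 2 := by
    rw [ZMod.ringChar_zmod_n]
    rintro rfl
    exact Nat.not_odd_iff_even.2 even_two hodd
  have hχ := quadraticChar_neg_one hF
  rw [ZMod.card] at hχ
  rw [natCard_sq_eq_sextic hF, ZMod.card]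
  rcases Nat.odd_mod_four_iff.1 (Nat.odd_iff.1 hodd) with h | h
  · have hS : ∑ x : ZMod p, quadraticChar (ZMod p) (x ^ 3 - x) = -a2 := by
      rw [ha2, natCard_sq_eq_cube_sub_self hF, ZMod.card]
      ring
    rw [hχ, ZMod.χ₄_nat_one_mod_four h, hS, ha31 h]
    ring
  · rw [ZMod.χ₄_nat_three_mod_four h] at hχ
    rw [sum_quadraticChar_cube_sub_self_eq_zero hχ, hχ, ha33 h]
    ring
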